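/- Let D₁ be the Lie algebra with basis {L(x), I(x) : x ∈ A}, bracket [L(x),L(y)] = ∂(y−x)L(x+y), [L(x),I(y)] = ∂(y)I(x+y), [I(x),I(y)] = 0, where ∂ : A → F is additive and nondegenerate. Then the bilinear alternating map ψ₂ with ψ₂(L(x),L(y)) = δ_{x+y,0}·(∂(x)³ − ∂(x)) and ψ₂ zero on other basis pairs is a 2-cocycle on D₁. -/

import Mathlib

/-!
On pairs involving some `I x` the bracket lands in the span of the `I`'s (or is zero), where `ψ₂`
vanishes, so only the triples `(L x, L y, L z)` with `x + y + z = 0` matter. With `a, b, c` the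
values of `∂` there, the cocycle identity becomes the cyclic identity
`Σ (b - a)(c³ - c) = 0` for `a + b + c = 0`, which holds because `Σ (b - a) c = 0` identically and
`Σ (b - a) c³ = (a - b)(b - c)(c - a)(a + b + c)`.
-/

/-- The bracket of the Lie algebra `D₁` of generalized differential operators of order at
most one, on basis elements: `Sum.inl x` stands for `L x = t^x ∂`, `Sum.inr x` for
`I x = t^x`.  The result lives in the free module on the basis. -/
noncomputable def d1Bracket {F A : Type*} [Field F] [AddCommGroup A]
    (d : A →+ F) : (A ⊕ A) → (A ⊕ A) → ((A ⊕ A) →₀ F)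
  | Sum.inl x, Sum.inl y => Finsupp.single (Sum.inl (x + y)) (d (y - x))
  | Sum.inl x, Sum.inr y => Finsupp.single (Sum.inr (x + y)) (d y)
  | Sum.inr x, Sum.inl y => Finsupp.single (Sum.inr (y + x)) (- d x)
  | Sum.inr _, Sum.inr _ => 0

/-- Evaluation of the bilinear extension of a map `ψ` on basis pairs, in its first
argument, against an element of the free module. -/
noncomputable def pairEval {F A : Type*} [Field F] [AddCommGroup A]
    (ψ : (A ⊕ A) → (A ⊕ A) → F) (m : (A ⊕ A) →₀ F) (b : A ⊕ A) : F :=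
  m.sum fun b' c => c * ψ b' b

lemma cyclic_sum_sub_mul_cube_sub_eq_zero {R : Type*} [CommRing R] {a b c : R}
    (h : a + b + c = 0) :
    (b - a) * ((a + b) ^ 3 - (a + b)) + (c - b) * ((b + c) ^ 3 - (b + c)) +
      (a - c) * ((c + a) ^ 3 - (c + a)) = 0 := by
  obtain rfl : c = -a - b := by linear_combination h
  ring

section Cocycle

variable {F A : Type*} [Field F] [AddCommGroup A]

@[simp]
lemma pairEval_single (ψ : (A ⊕ A) → (A ⊕ A) → F) (b b' : A ⊕ A) (c : F) :
    pairEval ψ (Finsupp.single b c) b' = c * ψ b b' := by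
  simp [pairEval]

@[simp]
lemma pairEval_zero (ψ : (A ⊕ A) → (A ⊕ A) → F) (b : A ⊕ A) :
    pairEval ψ 0 b = 0 := by
  simp [pairEval]

open Classical in
lemma cube_sub_delta_antisymm (d : A →+ F) (x y : A) :
    (if x + y = 0 then d x ^ 3 - d x else 0) = -(if y + x = 0 then d y ^ 3 - d y else 0) := by
  rw [add_comm y x]
  split_ifs with h
  · rw [eq_neg_of_add_eq_zero_right h, map_neg]
    ring
  · rw [neg_zero]

open Classical in
lemma cube_sub_delta_cocycle (d : A →+ F) (x y z : A) :
    d (y - x) * (if x + y + z = 0 then d (x + y) ^ 3 - d (x + y) else 0) +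
      d (z - y) * (if y + z + x = 0 then d (y + z) ^ 3 - d (y + z) else 0) +
      d (x - z) * (if z + x + y = 0 then d (z + x) ^ 3 - d (z + x) else 0) = 0 := by
  rw [show y + z + x = x + y + z by abel, show z + x + y = x + y + z by abel]
  split_ifs with h
  · have hd : d x + d y + d z = 0 := by rw [← map_add, ← map_add, h, map_zero]
    simpa only [map_add, map_sub] using cyclic_sum_sub_mul_cube_sub_eq_zero hd
  · simp

end Cocycle

open Classical in
theorem stmt_5_general {F : Type*} [Field F]
    {A : Type*} [AddCommGroup A]
    (d : A →+ F)
    (ψ : (A ⊕ A) → (A ⊕ A) → F)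
    (hψ : ∀ x y : A, ψ (Sum.inl x) (Sum.inl y) = if x + y = 0 then (d x) ^ 3 - d x else 0)
    (hψII : ∀ x y : A, ψ (Sum.inr x) (Sum.inr y) = 0)
    (hψLI : ∀ x y : A, ψ (Sum.inl x) (Sum.inr y) = 0)
    (hψIL : ∀ x y : A, ψ (Sum.inr x) (Sum.inl y) = 0) :
    (∀ b₁ b₂ : A ⊕ A, ψ b₁ b₂ = - ψ b₂ b₁) ∧
    (∀ b₁ b₂ b₃ : A ⊕ A,
      pairEval ψ (d1Bracket d b₁ b₂) b₃ + pairEval ψ (d1Bracket d b₂ b₃) b₁ +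
        pairEval ψ (d1Bracket d b₃ b₁) b₂ = 0) := by
  constructor
  · rintro (x | x) (y | y) <;> simp only [hψ, hψII, hψLI, hψIL, neg_zero]
    exact cube_sub_delta_antisymm d x y
  · rintro (x | x) (y | y) (z | z) <;>
      simp only [d1Bracket, pairEval_single, pairEval_zero, hψ, hψII, hψLI, hψIL, mul_zero,
        add_zero]
    exact cube_sub_delta_cocycle d x y z

open Classical in
/-- The map `ψ₂` with `ψ₂(L x, L y) = δ_{x+y,0} (∂(x)³ − ∂(x))`, zero on other basis pairs, is an
(alternating) 2-cocycle on `D₁`. -/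
theorem stmt_5 {F : Type*} [Field F] [CharZero F]
    {A : Type*} [AddCommGroup A]
    (d : A →+ F) (hd : ∀ x : A, d x = 0 → x = 0)
    (ψ : (A ⊕ A) → (A ⊕ A) → F)
    (hψ : ∀ x y : A, ψ (Sum.inl x) (Sum.inl y) = if x + y = 0 then (d x) ^ 3 - d x else 0)
    (hψII : ∀ x y : A, ψ (Sum.inr x) (Sum.inr y) = 0)
    (hψLI : ∀ x y : A, ψ (Sum.inl x) (Sum.inr y) = 0)
    (hψIL : ∀ x y : A, ψ (Sum.inr x) (Sum.inl y) = 0) :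
    (∀ b₁ b₂ : A ⊕ A, ψ b₁ b₂ = - ψ b₂ b₁) ∧
    (∀ b₁ b₂ b₃ : A ⊕ A,
      pairEval ψ (d1Bracket d b₁ b₂) b₃ + pairEval ψ (d1Bracket d b₂ b₃) b₁ +
        pairEval ψ (d1Bracket d b₃ b₁) b₂ = 0) :=
  stmt_5_general d ψ hψ hψII hψLI hψIL
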